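/- Main theorem, Goodman–Nguyen case: for events E1, H1, E2, H2, E3, H3 with P(Hi) > 0 for i = 1, 2, 3, if E1|H1 ⊑ E3|H3 (i.e., E1∩H1 ⊆ E3∩H3 and E3ᶜ∩H3 ⊆ E1ᶜ∩H1), then the triple conjunction satisfies C3(ω) = C12(ω) for every ω ∈ Ω (where C12 := ⟦(E1|H1)∧(E2|H2)⟧) and x123 = x12; consequently, if x12 > 0, the iterated conditional satisfies ⟦(E3|H3)|((E1|H1)∧(E2|H2))⟧(ω) = 1 for every ω ∈ Ω. -/

import Mathlib

open MeasureTheory Set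
open scoped Classical

noncomputable section

variable {Ω : Type*} [MeasurableSpace Ω]

/-- Indicator (with values in `ℝ`) of a set. -/
def ind (A : Set Ω) : Ω → ℝ := A.indicator 1

/-- Conditional probability `P(A|H) = P(A ∩ H)/P(H)`. -/
def condProb (P : Measure Ω) (A H : Set Ω) : ℝ :=
  (P (A ∩ H)).toReal / (P H).toReal

/-- The (indicator of the) conditional event `A|H`,
`⟦A|H⟧ = 1_{A∩H} + P(A|H)·1_{Hᶜ}`. -/
def condEvent (P : Measure Ω) (A H : Set Ω) : Ω → ℝ :=
  fun ω => ind (A ∩ H) ω + condProb P A H * ind Hᶜ ω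

/-- The prevision `z` of the conjunction `(A|H) ∧ (B|K)`:
`z = E[min(⟦A|H⟧, ⟦B|K⟧)·1_{H∪K}]/P(H∪K)`. -/
def conjPrev (P : Measure Ω) (A H B K : Set Ω) : ℝ :=
  (∫ ω, min (condEvent P A H ω) (condEvent P B K ω) * ind (H ∪ K) ω ∂P) /
    (P (H ∪ K)).toReal

/-- The conjunction `⟦(A|H) ∧ (B|K)⟧ = min(⟦A|H⟧, ⟦B|K⟧)·1_{H∪K} + z·1_{(H∪K)ᶜ}`. -/
def conjCE (P : Measure Ω) (A H B K : Set Ω) : Ω → ℝ :=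
  fun ω => min (condEvent P A H ω) (condEvent P B K ω) * ind (H ∪ K) ω
    + conjPrev P A H B K * ind (H ∪ K)ᶜ ω

/-- The iterated conditional `⟦(B|K)|(A|H)⟧ = ⟦(A|H)∧(B|K)⟧ + μ·(1 − ⟦A|H⟧)`,
with `μ = z / P(A|H)`. -/
def iterCond (P : Measure Ω) (A H B K : Set Ω) : Ω → ℝ :=
  fun ω => conjCE P A H B K ω +
    (conjPrev P A H B K / condProb P A H) * (1 - condEvent P A H ω)

/-- Goodman–Nguyen logical implication between conditional events:
`A|H ⊑ B|K` iff `A∩H ⊆ B∩K` and `Bᶜ∩K ⊆ Aᶜ∩H`. -/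
def GNle (A H B K : Set Ω) : Prop := A ∩ H ⊆ B ∩ K ∧ Bᶜ ∩ K ⊆ Aᶜ ∩ H

/-- Triple conjunction `⟦(E1|H1)∧(E2|H2)∧(E3|H3)⟧`, defined piecewise, except that
on `H1ᶜ∩H2ᶜ∩H3ᶜ` it is set to `0` (it is irrelevant there for computing `x123`). -/
def c3base (P : Measure Ω) (E1 H1 E2 H2 E3 H3 : Set Ω) : Ω → ℝ := fun ω =>
  if ω ∈ E1 ∩ H1 ∩ (E2 ∩ H2) ∩ (E3 ∩ H3) then 1
  else if ω ∈ (E1ᶜ ∩ H1) ∪ (E2ᶜ ∩ H2) ∪ (E3ᶜ ∩ H3) then 0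
  else if ω ∈ H1ᶜ ∩ (E2 ∩ H2) ∩ (E3 ∩ H3) then condProb P E1 H1
  else if ω ∈ H2ᶜ ∩ (E1 ∩ H1) ∩ (E3 ∩ H3) then condProb P E2 H2
  else if ω ∈ H3ᶜ ∩ (E1 ∩ H1) ∩ (E2 ∩ H2) then condProb P E3 H3
  else if ω ∈ H1ᶜ ∩ H2ᶜ ∩ (E3 ∩ H3) then conjPrev P E1 H1 E2 H2
  else if ω ∈ H1ᶜ ∩ H3ᶜ ∩ (E2 ∩ H2) then conjPrev P E1 H1 E3 H3
  else if ω ∈ H2ᶜ ∩ H3ᶜ ∩ (E1 ∩ H1) then conjPrev P E2 H2 E3 H3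
  else 0

/-- The prevision `x123 = E[C3·1_{H1∪H2∪H3}]/P(H1∪H2∪H3)` of the triple conjunction. -/
def x123 (P : Measure Ω) (E1 H1 E2 H2 E3 H3 : Set Ω) : ℝ :=
  (∫ ω, c3base P E1 H1 E2 H2 E3 H3 ω * ind (H1 ∪ H2 ∪ H3) ω ∂P) /
    (P (H1 ∪ H2 ∪ H3)).toReal

/-- The triple conjunction `C3 = ⟦(E1|H1)∧(E2|H2)∧(E3|H3)⟧`, equal to `x123` on
`H1ᶜ∩H2ᶜ∩H3ᶜ` and given piecewise by `c3base` elsewhere. -/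
def c3 (P : Measure Ω) (E1 H1 E2 H2 E3 H3 : Set Ω) : Ω → ℝ := fun ω =>
  if ω ∈ H1ᶜ ∩ H2ᶜ ∩ H3ᶜ then x123 P E1 H1 E2 H2 E3 H3
  else c3base P E1 H1 E2 H2 E3 H3 ω

/-- The iterated conditional `⟦(E3|H3)|((E1|H1)∧(E2|H2))⟧ = C3 + μ·(1 − C12)`,
where `μ = x123/x12` and `C12 = ⟦(E1|H1)∧(E2|H2)⟧`. -/
def iter3 (P : Measure Ω) (E1 H1 E2 H2 E3 H3 : Set Ω) : Ω → ℝ := fun ω =>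
  c3 P E1 H1 E2 H2 E3 H3 ω +
    (x123 P E1 H1 E2 H2 E3 H3 / conjPrev P E1 H1 E2 H2) *
      (1 - conjCE P E1 H1 E2 H2 ω)


/-!
Goodman–Nguyen implication `E1|H1 ⊑ E3|H3` makes `⟦E1|H1⟧ ≤ ⟦E3|H3⟧` pointwise, so `E3|H3` is
redundant in every piece of `C3`: on `H1 ∪ H2 ∪ H3` the triple conjunction agrees with `C12`
(the piece `x13` being `x1`, since `(E1|H1) ∧ (E3|H3)` is `E1|H1`).
A conjunction is constant, equal to its prevision, off the union of its conditioning events, so its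
mean over any larger event is still that prevision; over `H1 ∪ H2 ∪ H3` this gives `x123 = x12`.
Hence `C3 = C12` everywhere, and the iterated conditional is `C12 + 1 · (1 - C12) = 1`.
-/

section

omit [MeasurableSpace Ω]

lemma ind_apply (A : Set Ω) (ω : Ω) : ind A ω = if ω ∈ A then 1 else 0 := by
  simp [ind, Set.indicator_apply]

lemma mul_ind_eq_indicator (f : Ω → ℝ) (S : Set Ω) :
    (fun ω => f ω * ind S ω) = S.indicator f := by
  ext ω
  by_cases h : ω ∈ S <;> simp [ind_apply, h]

end

section

variable {P : Measure Ω} {A H B K : Set Ω}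

lemma integrable_ind [IsFiniteMeasure P] (hA : MeasurableSet A) : Integrable (ind A) P :=
  (integrable_const (1 : ℝ)).indicator hA

lemma condProb_nonneg : 0 ≤ condProb P A H :=
  div_nonneg measureReal_nonneg measureReal_nonneg

lemma condProb_le_one [IsFiniteMeasure P] : condProb P A H ≤ 1 :=
  div_le_one_of_le₀ (measureReal_mono inter_subset_right) measureReal_nonneg

lemma condProb_mul_measureReal [IsFiniteMeasure P] (hH : P H ≠ 0) :
    condProb P A H * P.real H = P.real (A ∩ H) :=
  div_mul_cancel₀ _ ((measureReal_ne_zero_iff).mpr hH)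

lemma condEvent_of_mem_inter {ω : Ω} (h : ω ∈ A ∩ H) : condEvent P A H ω = 1 := by
  simp [condEvent, ind_apply, h, h.2]

lemma condEvent_of_mem_compl_inter {ω : Ω} (h : ω ∈ Aᶜ ∩ H) : condEvent P A H ω = 0 := by
  simp [condEvent, ind_apply, h.2, show ω ∉ A from h.1]

lemma condEvent_of_notMem {ω : Ω} (h : ω ∉ H) : condEvent P A H ω = condProb P A H := by
  simp [condEvent, ind_apply, h]

lemma condEvent_nonneg (ω : Ω) : 0 ≤ condEvent P A H ω :=
  add_nonneg (by rw [ind_apply]; split_ifs <;> norm_num)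
    (mul_nonneg condProb_nonneg (by rw [ind_apply]; split_ifs <;> norm_num))

lemma integrable_condEvent [IsFiniteMeasure P] (hA : MeasurableSet A) (hH : MeasurableSet H) :
    Integrable (condEvent P A H) P :=
  (integrable_ind (hA.inter hH)).add ((integrable_ind hH.compl).const_mul _)

lemma conjCE_of_notMem {ω : Ω} (h : ω ∉ H ∪ K) : conjCE P A H B K ω = conjPrev P A H B K := by
  rw [conjCE, ind_apply, ind_apply, if_neg h, if_pos (mem_compl h), mul_zero, zero_add, mul_one]

lemma setIntegral_eq_mul_measureReal_of_subset [IsFiniteMeasure P] {f : Ω → ℝ} {c : ℝ}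
    {S T : Set Ω} (hS : MeasurableSet S) (hT : MeasurableSet T) (hST : S ⊆ T)
    (hf : IntegrableOn f S P) (hc : ∀ ω ∉ S, f ω = c) (hfS : ∫ ω in S, f ω ∂P = c * P.real S) :
    ∫ ω in T, f ω ∂P = c * P.real T := by
  have hTS : MeasurableSet (T \ S) := hT.diff hS
  have hoff : EqOn f (fun _ => c) (T \ S) := fun ω hω => hc ω hω.2
  have hf' : IntegrableOn f (T \ S) P := (integrableOn_const (C := c)).congr_fun hoff.symm hTS
  rw [← union_sdiff_cancel hST, setIntegral_union disjoint_sdiff_right hTS hf hf', hfS,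
    setIntegral_congr_fun hTS hoff, setIntegral_const, smul_eq_mul,
    measureReal_union disjoint_sdiff_right hTS]
  ring

lemma setIntegral_condEvent [IsFiniteMeasure P] {T : Set Ω} (hA : MeasurableSet A)
    (hH : MeasurableSet H) (hH0 : P H ≠ 0) (hT : MeasurableSet T) (hHT : H ⊆ T) :
    ∫ ω in T, condEvent P A H ω ∂P = condProb P A H * P.real T := by
  refine setIntegral_eq_mul_measureReal_of_subset hH hT hHT
    (integrable_condEvent hA hH).integrableOn (fun ω => condEvent_of_notMem) ?_
  have hon : EqOn (condEvent P A H) ((A ∩ H).indicator 1) H := fun ω hω => by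
    simp [condEvent, ind, hω]
  rw [setIntegral_congr_fun hH hon, setIntegral_indicator (hA.inter hH), Pi.one_def,
    setIntegral_const, condProb_mul_measureReal hH0, smul_eq_mul, mul_one, inter_comm H,
    inter_assoc, inter_self]

lemma setIntegral_conjCE [IsFiniteMeasure P] {T : Set Ω} (hA : MeasurableSet A)
    (hH : MeasurableSet H) (hB : MeasurableSet B) (hK : MeasurableSet K) (hHK : P (H ∪ K) ≠ 0)
    (hT : MeasurableSet T) (hHKT : H ∪ K ⊆ T) :
    ∫ ω in T, conjCE P A H B K ω ∂P = conjPrev P A H B K * P.real T := by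
  have hmin : Integrable (fun ω => min (condEvent P A H ω) (condEvent P B K ω)) P :=
    (integrable_condEvent hA hH).inf (integrable_condEvent hB hK)
  have hon : EqOn (conjCE P A H B K) (fun ω => min (condEvent P A H ω) (condEvent P B K ω))
      (H ∪ K) := fun ω hω => by
    rw [conjCE, ind_apply, ind_apply, if_pos hω, if_neg (notMem_compl_iff.mpr hω), mul_one,
      mul_zero, add_zero]
  refine setIntegral_eq_mul_measureReal_of_subset (hH.union hK) hT hHKT
    (hmin.integrableOn.congr_fun hon.symm (hH.union hK)) (fun ω => conjCE_of_notMem) ?_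
  rw [setIntegral_congr_fun (hH.union hK) hon, ← integral_indicator (hH.union hK),
    ← mul_ind_eq_indicator, conjPrev]
  exact (div_mul_cancel₀ _ ((measureReal_ne_zero_iff).mpr hHK)).symm

end

section

variable {P : Measure Ω} [IsFiniteMeasure P] {A H B K : Set Ω}

lemma GNle.condProb_le (h : GNle A H B K) (hA : MeasurableSet A) (hH : P H ≠ 0)
    (hK : P K ≠ 0) : condProb P A H ≤ condProb P B K := by
  have hH' : P.real H = P.real (A ∩ H) + P.real (Aᶜ ∩ H) := by
    rw [← measureReal_inter_add_sdiff hA, inter_comm, sdiff_eq_compl_inter]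
  have hK' : P.real K ≤ P.real (B ∩ K) + P.real (Bᶜ ∩ K) := by
    calc P.real K ≤ P.real (B ∩ K ∪ Bᶜ ∩ K) :=
          measureReal_mono (fun ω hω => by by_cases hB : ω ∈ B <;> simp [hB, hω])
      _ ≤ _ := measureReal_union_le _ _
  have hAB := measureReal_mono (μ := P) h.1
  have hBA := measureReal_mono (μ := P) h.2
  show P.real (A ∩ H) / P.real H ≤ P.real (B ∩ K) / P.real K
  rw [div_le_div_iff₀ (measureReal_nonneg.lt_of_ne' ((measureReal_ne_zero_iff).mpr hH))
    (measureReal_nonneg.lt_of_ne' ((measureReal_ne_zero_iff).mpr hK))]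
  calc P.real (A ∩ H) * P.real K
      ≤ P.real (A ∩ H) * (P.real (B ∩ K) + P.real (Bᶜ ∩ K)) :=
        mul_le_mul_of_nonneg_left hK' measureReal_nonneg
    _ ≤ P.real (B ∩ K) * (P.real (A ∩ H) + P.real (Aᶜ ∩ H)) := by
        nlinarith [measureReal_nonneg (μ := P) (s := A ∩ H),
          measureReal_nonneg (μ := P) (s := Bᶜ ∩ K)]
    _ = P.real (B ∩ K) * P.real H := by rw [hH']

lemma GNle.condEvent_le (h : GNle A H B K) (hA : MeasurableSet A) (hH : P H ≠ 0)
    (hK : P K ≠ 0) (ω : Ω) : condEvent P A H ω ≤ condEvent P B K ω := by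
  by_cases hωH : ω ∈ H
  · by_cases hωA : ω ∈ A
    · rw [condEvent_of_mem_inter ⟨hωA, hωH⟩, condEvent_of_mem_inter (h.1 ⟨hωA, hωH⟩)]
    · rw [condEvent_of_mem_compl_inter ⟨hωA, hωH⟩]
      exact condEvent_nonneg ω
  rw [condEvent_of_notMem hωH]
  by_cases hωK : ω ∈ K
  · have hωB : ω ∈ B := by_contra fun hωB => hωH (h.2 ⟨hωB, hωK⟩).2
    rw [condEvent_of_mem_inter ⟨hωB, hωK⟩]
    exact condProb_le_one
  · rw [condEvent_of_notMem hωK]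
    exact h.condProb_le hA hH hK

lemma GNle.conjPrev_eq (h : GNle A H B K) (hA : MeasurableSet A) (hH : MeasurableSet H)
    (hK : MeasurableSet K) (hH0 : P H ≠ 0) (hK0 : P K ≠ 0) :
    conjPrev P A H B K = condProb P A H := by
  have hHK : P.real (H ∪ K) ≠ 0 :=
    (measureReal_ne_zero_iff).mpr (measure_mono_null subset_union_left |>.mt hH0)
  have hmin : (fun ω => min (condEvent P A H ω) (condEvent P B K ω) * ind (H ∪ K) ω) =
      (H ∪ K).indicator (condEvent P A H) := by
    simp_rw [min_eq_left (h.condEvent_le hA hH0 hK0 _)]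
    exact mul_ind_eq_indicator _ _
  rw [conjPrev, hmin, integral_indicator (hH.union hK),
    setIntegral_condEvent hA hH hH0 (hH.union hK) subset_union_left]
  exact mul_div_cancel_right₀ _ hHK

end

section

variable {P : Measure Ω} [IsFiniteMeasure P] {E1 H1 E2 H2 E3 H3 : Set Ω}

lemma GNle.c3base_eq_conjCE (h : GNle E1 H1 E3 H3) (hE1 : MeasurableSet E1)
    (hH1 : MeasurableSet H1) (hH3 : MeasurableSet H3) (h1 : P H1 ≠ 0) (h3 : P H3 ≠ 0)
    {ω : Ω} (hω : ω ∈ H1 ∪ H2 ∪ H3) :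
    c3base P E1 H1 E2 H2 E3 H3 ω = conjCE P E1 H1 E2 H2 ω := by
  have h13 := h.conjPrev_eq hE1 hH1 hH3 h1 h3
  -- `h` empties the pieces of `c3base` on `E1 ∩ H1 ∩ H3ᶜ` and puts its zero piece `E3ᶜ ∩ H3`
  -- inside `E1ᶜ ∩ H1`, where `C12` vanishes too; the piece `x13` is `x1` by `h13`.
  have hE3 : ω ∈ E1 → ω ∈ H1 → ω ∈ E3 ∧ ω ∈ H3 := fun a b => h.1 ⟨a, b⟩
  have hE1c : ω ∉ E3 → ω ∈ H3 → ω ∉ E1 ∧ ω ∈ H1 := fun a b => h.2 ⟨a, b⟩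
  by_cases m1 : ω ∈ H1 <;> by_cases e1 : ω ∈ E1 <;> by_cases m2 : ω ∈ H2 <;>
    by_cases e2 : ω ∈ E2 <;> by_cases m3 : ω ∈ H3 <;> by_cases e3 : ω ∈ E3 <;>
    simp_all [c3base, conjCE, condEvent, ind_apply, condProb_nonneg, condProb_le_one]

lemma GNle.x123_eq_conjPrev (h : GNle E1 H1 E3 H3) (hE1 : MeasurableSet E1)
    (hH1 : MeasurableSet H1) (hE2 : MeasurableSet E2) (hH2 : MeasurableSet H2)
    (hH3 : MeasurableSet H3) (h1 : P H1 ≠ 0) (h3 : P H3 ≠ 0) :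
    x123 P E1 H1 E2 H2 E3 H3 = conjPrev P E1 H1 E2 H2 := by
  have hU : MeasurableSet (H1 ∪ H2 ∪ H3) := (hH1.union hH2).union hH3
  have hU0 : P.real (H1 ∪ H2 ∪ H3) ≠ 0 := (measureReal_ne_zero_iff).mpr
    (measure_mono_null (subset_union_left.trans subset_union_left) |>.mt h1)
  have hC3 : (fun ω => c3base P E1 H1 E2 H2 E3 H3 ω * ind (H1 ∪ H2 ∪ H3) ω) =
      (H1 ∪ H2 ∪ H3).indicator (conjCE P E1 H1 E2 H2) := by
    rw [mul_ind_eq_indicator]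
    exact indicator_congr fun ω hω => h.c3base_eq_conjCE hE1 hH1 hH3 h1 h3 hω
  rw [x123, hC3, integral_indicator hU, setIntegral_conjCE hE1 hH1 hE2 hH2
    (measure_mono_null subset_union_left |>.mt h1) hU subset_union_left]
  exact mul_div_cancel_right₀ _ hU0

end

theorem main_case_GN_general (P : Measure Ω) [IsProbabilityMeasure P]
    (E1 H1 E2 H2 E3 H3 : Set Ω)
    (hE1 : MeasurableSet E1) (hH1 : MeasurableSet H1)
    (hE2 : MeasurableSet E2) (hH2 : MeasurableSet H2)
    (hH3 : MeasurableSet H3)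
    (h1 : 0 < P H1) (h3 : 0 < P H3)
    (hGN : GNle E1 H1 E3 H3) :
    (∀ ω, c3 P E1 H1 E2 H2 E3 H3 ω = conjCE P E1 H1 E2 H2 ω) ∧
      x123 P E1 H1 E2 H2 E3 H3 = conjPrev P E1 H1 E2 H2 ∧
      (0 < conjPrev P E1 H1 E2 H2 →
        ∀ ω, iter3 P E1 H1 E2 H2 E3 H3 ω = 1) := by
  have hx := hGN.x123_eq_conjPrev hE1 hH1 hE2 hH2 hH3 h1.ne' h3.ne'
  have hC3 : ∀ ω, c3 P E1 H1 E2 H2 E3 H3 ω = conjCE P E1 H1 E2 H2 ω := by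
    intro ω
    simp only [c3, ← compl_union]
    by_cases hω : ω ∈ H1 ∪ H2 ∪ H3
    · rw [if_neg (notMem_compl_iff.mpr hω)]
      exact hGN.c3base_eq_conjCE hE1 hH1 hH3 h1.ne' h3.ne' hω
    · rw [if_pos (mem_compl hω), hx, conjCE_of_notMem fun h12 => hω (subset_union_left h12)]
  refine ⟨hC3, hx, fun hpos ω => ?_⟩
  rw [iter3, hC3, hx, div_self hpos.ne', one_mul, add_sub_cancel]

/-- Main theorem, Goodman–Nguyen case `E1|H1 ⊑ E3|H3`: the triple conjunction
`C3` coincides pointwise with `C12 = ⟦(E1|H1)∧(E2|H2)⟧` and `x123 = x12`;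
consequently, if `x12 > 0`, the iterated conditional
`⟦(E3|H3)|((E1|H1)∧(E2|H2))⟧` is constantly `1`. -/
theorem main_case_GN (P : Measure Ω) [IsProbabilityMeasure P]
    (E1 H1 E2 H2 E3 H3 : Set Ω)
    (hE1 : MeasurableSet E1) (hH1 : MeasurableSet H1)
    (hE2 : MeasurableSet E2) (hH2 : MeasurableSet H2)
    (hE3 : MeasurableSet E3) (hH3 : MeasurableSet H3)
    (h1 : 0 < P H1) (h2 : 0 < P H2) (h3 : 0 < P H3)
    (hGN : GNle E1 H1 E3 H3) :
    (∀ ω, c3 P E1 H1 E2 H2 E3 H3 ω = conjCE P E1 H1 E2 H2 ω) ∧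
      x123 P E1 H1 E2 H2 E3 H3 = conjPrev P E1 H1 E2 H2 ∧
      (0 < conjPrev P E1 H1 E2 H2 →
        ∀ ω, iter3 P E1 H1 E2 H2 E3 H3 ω = 1) :=
  main_case_GN_general P E1 H1 E2 H2 E3 H3 hE1 hH1 hE2 hH2 hH3 h1 h3 hGN

end
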